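/- Suppose A ∈ ℝ^{n×d} has full column rank with Lewis weights w_1, …, w_n. Then for every vector u in the column space of A, every index i ∈ [n], and every p ≥ 1, |u_i| ≤ d^{1/2 - 1/max(2,p)} · w_i^{1/p} · ‖u‖_p. -/

import Mathlib

/-!
Write `G = Aᵀ W^{1-2/p} A` and `u = A x`. The fixed-point equation says `w_j^{2/p} = a_jᵀ G⁻¹ a_j`,
so Cauchy–Schwarz in the inner product of `G` gives `u_j² ≤ w_j^{2/p} · xᵀ G x`, and
`tr (W^{1-2/p} A G⁻¹ Aᵀ) = tr (G G⁻¹) = d` gives `∑ w_j = d`. It remains to bound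
`xᵀ G x = ∑ w_j^{1-2/p} u_j²` by `d^{1-2/max(2,p)} ‖u‖_p²`: for `p ≥ 2` this is Hölder's
inequality with weights `w_j`; for `p ≤ 2`, feeding the coordinate bound into `|u_j|^{2-p}` gives
`xᵀ G x ≤ (xᵀ G x)^{1-p/2} ‖u‖_p^p`.
-/

open Matrix

namespace Matrix

variable {m k : Type*} [Fintype k]

theorem PosSemidef.sq_dotProduct_mulVec_le {M : Matrix k k ℝ} (hM : M.PosSemidef) (y x : k → ℝ) :
    (y ⬝ᵥ M *ᵥ x) ^ 2 ≤ (y ⬝ᵥ M *ᵥ y) * (x ⬝ᵥ M *ᵥ x) := by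
  let _ := M.toSeminormedAddCommGroup hM
  let _ := M.toInnerProductSpace hM
  have inner_eq (a b : k → ℝ) : (inner ℝ a b : ℝ) = a ⬝ᵥ M *ᵥ b := by
    change (M *ᵥ b) ⬝ᵥ star a = _
    rw [star_trivial, dotProduct_comm]
  simpa only [sq, inner_eq] using real_inner_mul_inner_self_le y x

theorem PosDef.sq_dotProduct_le [DecidableEq k] {M : Matrix k k ℝ} (hM : M.PosDef) (v x : k → ℝ) :
    (v ⬝ᵥ x) ^ 2 ≤ (v ⬝ᵥ M⁻¹ *ᵥ v) * (x ⬝ᵥ M *ᵥ x) := by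
  have hMy : M *ᵥ (M⁻¹ *ᵥ v) = v := by
    rw [mulVec_mulVec, mul_nonsing_inv M (M.isUnit_iff_isUnit_det.mp hM.isUnit), one_mulVec]
  have hMt : Mᵀ = M := hM.isHermitian.eq
  have := hM.posSemidef.sq_dotProduct_mulVec_le (M⁻¹ *ᵥ v) x
  rwa [hMy, dotProduct_mulVec, ← mulVec_transpose, hMt, hMy, dotProduct_comm (M⁻¹ *ᵥ v)] at this

theorem injective_mulVec_of_rank_eq_card {A : Matrix m k ℝ} (hA : A.rank = Fintype.card k) :
    Function.Injective A.mulVec :=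
  mulVec_injective_iff.mpr <| linearIndependent_iff_card_eq_finrank_span.mpr <| by
    rw [Set.finrank, ← rank_eq_finrank_span_cols, hA]

variable [Fintype m] [DecidableEq m]

theorem sum_mul_dotProduct_inv_mulVec_eq_card [DecidableEq k] (A : Matrix m k ℝ) (D : m → ℝ)
    (hG : IsUnit (Aᵀ * diagonal D * A).det) :
    ∑ j, D j * (A j ⬝ᵥ (Aᵀ * diagonal D * A)⁻¹ *ᵥ A j) = Fintype.card k := by
  set G := Aᵀ * diagonal D * A
  calc ∑ j, D j * (A j ⬝ᵥ G⁻¹ *ᵥ A j) = trace (diagonal D * (A * (G⁻¹ * Aᵀ))) := by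
        simp only [trace, diag, diagonal_mul]
        simp only [mul_apply, dotProduct, mulVec, transpose_apply]
    _ = trace (Aᵀ * (diagonal D * A * G⁻¹)) := by
        rw [trace_mul_comm Aᵀ]; simp only [Matrix.mul_assoc]
    _ = trace (G * G⁻¹) := by simp only [G, Matrix.mul_assoc]
    _ = Fintype.card k := by rw [mul_nonsing_inv G hG, trace_one]

theorem dotProduct_transpose_mul_diagonal_mul_mulVec (A : Matrix m k ℝ) (D : m → ℝ)
    (x : k → ℝ) :
    x ⬝ᵥ (Aᵀ * diagonal D * A) *ᵥ x = ∑ j, D j * (A *ᵥ x) j ^ 2 := by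
  rw [← mulVec_mulVec, ← mulVec_mulVec, dotProduct_mulVec, vecMul_transpose, dotProduct]
  simp only [mulVec_diagonal]
  exact Finset.sum_congr rfl fun j _ => by ring

end Matrix

namespace Real

variable {ι : Type*} [Fintype ι]

theorem sq_rpow_div_two (x r : ℝ) : (x ^ 2) ^ (r / 2) = |x| ^ r := by
  rw [rpow_div_two_eq_sqrt r (sq_nonneg x), sqrt_sq_eq_abs]

theorem sum_rpow_one_sub_two_div_mul_sq_le {p : ℝ} (hp : 2 ≤ p) {w : ι → ℝ} (hw : ∀ j, 0 < w j)
    (u : ι → ℝ) :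
    ∑ j, w j ^ (1 - 2 / p) * u j ^ 2 ≤ (∑ j, w j) ^ (1 - 2 / p) * (∑ j, |u j| ^ p) ^ (2 / p) := by
  have hp0 : p ≠ 0 := by positivity
  have key := inner_le_weight_mul_Lp_of_nonneg Finset.univ (p := p / 2) (by linarith) w
    (fun j => w j ^ (-2 / p) * u j ^ 2) (fun j => (hw j).le)
    (fun j => mul_nonneg (rpow_nonneg (hw j).le _) (sq_nonneg _))
  have hlhs (j : ι) : w j * (w j ^ (-2 / p) * u j ^ 2) = w j ^ (1 - 2 / p) * u j ^ 2 := by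
    rw [sub_eq_add_neg, rpow_add (hw j), rpow_one, neg_div, mul_assoc]
  have hrhs (j : ι) : w j * (w j ^ (-2 / p) * u j ^ 2) ^ (p / 2) = |u j| ^ p := by
    rw [mul_rpow (rpow_nonneg (hw j).le _) (sq_nonneg _), ← rpow_mul (hw j).le, sq_rpow_div_two,
      show -2 / p * (p / 2) = -1 by field_simp, rpow_neg_one, mul_inv_cancel_left₀ (hw j).ne']
  simpa only [hlhs, hrhs, inv_div] using key

theorem le_sum_abs_rpow_rpow_two_div_of_le_two {p : ℝ} (hp0 : 0 < p) (hp2 : p ≤ 2) {w : ι → ℝ}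
    (hw : ∀ j, 0 < w j) {u : ι → ℝ} {t : ℝ} (ht : t = ∑ j, w j ^ (1 - 2 / p) * u j ^ 2)
    (hu : ∀ j, u j ^ 2 ≤ w j ^ (2 / p) * t) :
    t ≤ (∑ j, |u j| ^ p) ^ (2 / p) := by
  have ht0 : 0 ≤ t := ht ▸ Finset.sum_nonneg fun j _ =>
    mul_nonneg (rpow_nonneg (hw j).le _) (sq_nonneg _)
  have hterm (j : ι) : w j ^ (1 - 2 / p) * u j ^ 2 ≤ t ^ ((2 - p) / 2) * |u j| ^ p := by
    have hsplit : u j ^ 2 = |u j| ^ p * (u j ^ 2) ^ ((2 - p) / 2) := by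
      rw [sq_rpow_div_two, ← rpow_add' (abs_nonneg _) (by norm_num), add_sub_cancel,
        rpow_two, sq_abs]
    have hw1 : w j ^ (1 - 2 / p) * (w j ^ (2 / p)) ^ ((2 - p) / 2) = 1 := by
      rw [← rpow_mul (hw j).le, ← rpow_add (hw j), show 1 - 2 / p + 2 / p * ((2 - p) / 2) = 0 by
        field_simp; ring, rpow_zero]
    calc w j ^ (1 - 2 / p) * u j ^ 2
        = w j ^ (1 - 2 / p) * |u j| ^ p * (u j ^ 2) ^ ((2 - p) / 2) := by
          rw [mul_assoc, ← hsplit]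
      _ ≤ w j ^ (1 - 2 / p) * |u j| ^ p * (w j ^ (2 / p) * t) ^ ((2 - p) / 2) := by
        gcongr
        · exact mul_nonneg (rpow_nonneg (hw j).le _) (rpow_nonneg (abs_nonneg _) _)
        · exact hu j
      _ = t ^ ((2 - p) / 2) * |u j| ^ p := by
        rw [mul_rpow (rpow_nonneg (hw j).le _) ht0]
        linear_combination (t ^ ((2 - p) / 2) * |u j| ^ p) * hw1
  have hself : t ^ ((2 - p) / 2) * t ^ (p / 2) ≤ t ^ ((2 - p) / 2) * ∑ j, |u j| ^ p := by
    rw [← rpow_add' ht0 (by ring_nf; norm_num), show (2 - p) / 2 + p / 2 = 1 by ring, rpow_one,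
      Finset.mul_sum]
    exact ht.trans_le (Finset.sum_le_sum fun j _ => hterm j)
  rcases ht0.eq_or_lt with rfl | htpos
  · exact rpow_nonneg (Finset.sum_nonneg fun j _ => rpow_nonneg (abs_nonneg _) _) _
  calc t = (t ^ (p / 2)) ^ (2 / p) := by
        rw [← rpow_mul ht0, show p / 2 * (2 / p) = 1 by field_simp, rpow_one]
    _ ≤ (∑ j, |u j| ^ p) ^ (2 / p) := by
      gcongr
      exact le_of_mul_le_mul_left hself (rpow_pos_of_pos htpos _)

theorem le_sum_rpow_mul_sum_abs_rpow_rpow_two_div {p : ℝ} (hp : 1 ≤ p) {w : ι → ℝ}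
    (hw : ∀ j, 0 < w j) {u : ι → ℝ} {t : ℝ} (ht : t = ∑ j, w j ^ (1 - 2 / p) * u j ^ 2)
    (hu : ∀ j, u j ^ 2 ≤ w j ^ (2 / p) * t) :
    t ≤ (∑ j, w j) ^ (1 - 2 / max 2 p) * (∑ j, |u j| ^ p) ^ (2 / p) := by
  rcases le_total p 2 with hp2 | hp2
  · rw [max_eq_left hp2, div_self two_ne_zero, sub_self, rpow_zero, one_mul]
    exact le_sum_abs_rpow_rpow_two_div_of_le_two (by linarith) hp2 hw ht hu
  · rw [max_eq_right hp2, ht]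
    exact sum_rpow_one_sub_two_div_mul_sq_le hp2 hw u

end Real

section LewisWeights

variable {m k : Type*} [Fintype m] [Fintype k] [DecidableEq m] [DecidableEq k]

noncomputable def lewisGram (p : ℝ) (A : Matrix m k ℝ) (w : m → ℝ) : Matrix k k ℝ :=
  Aᵀ * diagonal (fun j => w j ^ (1 - 2 / p)) * A

/-- `⁻¹` stands for the paper's pseudo-inverse `†`; the two agree once `A` has full column rank. -/
structure IsLewisWeights (p : ℝ) (A : Matrix m k ℝ) (w : m → ℝ) : Prop where
  pos : ∀ j, 0 < w j
  eq_rpow : ∀ j, w j = (A j ⬝ᵥ (lewisGram p A w)⁻¹ *ᵥ A j) ^ (p / 2)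

namespace IsLewisWeights

variable {p : ℝ} {A : Matrix m k ℝ} {w : m → ℝ}

theorem posDef_lewisGram (hw : IsLewisWeights p A w) (hA : Function.Injective A.mulVec) :
    (lewisGram p A w).PosDef := by
  simpa [lewisGram] using (PosDef.diagonal fun j => Real.rpow_pos_of_pos (hw.pos j) (1 - 2 / p))
    |>.conjTranspose_mul_mul_same hA

theorem rpow_two_div_eq (hw : IsLewisWeights p A w) (hp : p ≠ 0)
    (hA : Function.Injective A.mulVec) (j : m) :
    w j ^ (2 / p) = A j ⬝ᵥ (lewisGram p A w)⁻¹ *ᵥ A j := by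
  have hlev : 0 ≤ A j ⬝ᵥ (lewisGram p A w)⁻¹ *ᵥ A j := by
    simpa using (hw.posDef_lewisGram hA).inv.posSemidef.dotProduct_mulVec_nonneg (A j)
  rw [hw.eq_rpow j, ← Real.rpow_mul hlev, show p / 2 * (2 / p) = 1 by field_simp, Real.rpow_one]

theorem sum_eq_card (hw : IsLewisWeights p A w) (hp : p ≠ 0)
    (hA : Function.Injective A.mulVec) : ∑ j, w j = Fintype.card k := by
  rw [← sum_mul_dotProduct_inv_mulVec_eq_card A _
    (isUnit_iff_ne_zero.mpr (hw.posDef_lewisGram hA).det_pos.ne')]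
  refine Finset.sum_congr rfl fun j _ => ?_
  rw [← lewisGram, ← hw.rpow_two_div_eq hp hA, ← Real.rpow_add (hw.pos j), sub_add_cancel,
    Real.rpow_one]

theorem sq_mulVec_apply_le (hw : IsLewisWeights p A w) (hp : p ≠ 0)
    (hA : Function.Injective A.mulVec) (x : k → ℝ) (j : m) :
    (A *ᵥ x) j ^ 2 ≤ w j ^ (2 / p) * (x ⬝ᵥ lewisGram p A w *ᵥ x) :=
  hw.rpow_two_div_eq hp hA j ▸ (hw.posDef_lewisGram hA).sq_dotProduct_le (A j) x

end IsLewisWeights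

end LewisWeights

/-- Property (d) of Lewis weights: if `A` has full column rank with `ℓ_p`-Lewis weights
`w_1,…,w_n`, then for every `u` in the column space of `A` and every index `i`,
`|u_i| ≤ d^{1/2 - 1/max(2,p)} · w_i^{1/p} · ‖u‖_p`. -/
theorem lewis_weight_coordinate_bound (n d : ℕ) (p : ℝ) (hp : 1 ≤ p)
    (A : Matrix (Fin n) (Fin d) ℝ) (hrank : A.rank = d)
    (w : Fin n → ℝ) (hw : ∀ i, 0 < w i)
    (hfix : ∀ i, w i =
      (A i ⬝ᵥ ((Aᵀ * Matrix.diagonal (fun k => w k ^ (1 - 2 / p)) * A)⁻¹ *ᵥ A i)) ^ (p / 2))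
    (u : Fin n → ℝ) (hu : ∃ x : Fin d → ℝ, u = A *ᵥ x) (i : Fin n) :
    |u i| ≤ (d : ℝ) ^ ((1 : ℝ) / 2 - 1 / max 2 p) * w i ^ (1 / p) *
      (∑ j, |u j| ^ p) ^ (1 / p) := by
  obtain ⟨x, rfl⟩ := hu
  have hp0 : p ≠ 0 := (zero_lt_one.trans_le hp).ne'
  have hL : IsLewisWeights p A w := ⟨hw, hfix⟩
  have hA := injective_mulVec_of_rank_eq_card (by rwa [Fintype.card_fin])
  have hsum : ∑ j, w j = d := by rw [hL.sum_eq_card hp0 hA, Fintype.card_fin]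
  have hquad : x ⬝ᵥ lewisGram p A w *ᵥ x ≤
      (d : ℝ) ^ (1 - 2 / max 2 p) * (∑ j, |(A *ᵥ x) j| ^ p) ^ (2 / p) :=
    hsum ▸ Real.le_sum_rpow_mul_sum_abs_rpow_rpow_two_div hp hw
      (dotProduct_transpose_mul_diagonal_mul_mulVec A _ x) (hL.sq_mulVec_apply_le hp0 hA x)
  have hwi := (hw i).le
  refine abs_le_of_sq_le_sq ?_ (by positivity)
  calc (A *ᵥ x) i ^ 2 ≤ w i ^ (2 / p) * (x ⬝ᵥ lewisGram p A w *ᵥ x) :=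
        hL.sq_mulVec_apply_le hp0 hA x i
    _ ≤ w i ^ (2 / p) * ((d : ℝ) ^ (1 - 2 / max 2 p) * (∑ j, |(A *ᵥ x) j| ^ p) ^ (2 / p)) := by
        gcongr
    _ = _ := by
        rw [mul_pow, mul_pow, ← Real.rpow_mul_natCast hwi, ← Real.rpow_mul_natCast (by positivity),
          ← Real.rpow_mul_natCast (by positivity)]
        ring_nf
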